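/- Let $p > n \geq 2$ be the characteristic of $\mathbb{F}_q$, let $0 \leq i < j < n$, and let $f(X) = X^n + A X^i$ over the rational function field $\mathbb{F}_q(A)$ (with $A$ transcendental). Then $\operatorname{Res}(f^{(i)}, f^{(j)}) = \pm \big(n(n-1)\cdots(n-j+1)\big)^{n-i} (i!)^{n-j} A^{\,n-j}$; in particular, viewed as a polynomial in $A$, this resultant is nonconstant. -/

import Mathlib

open Polynomial

/-- The Sylvester matrix of two polynomials. -/
noncomputable def sylvester {R : Type*} [CommRing R] (f g : R[X]) :
    Matrix (Fin (g.natDegree + f.natDegree)) (Fin (g.natDegree + f.natDegree)) R :=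
  Matrix.of fun i j =>
    if (i : ℕ) < g.natDegree then
      (if (i : ℕ) ≤ (j : ℕ) ∧ (j : ℕ) ≤ f.natDegree + (i : ℕ) then
        f.coeff (f.natDegree + (i : ℕ) - (j : ℕ)) else 0)
    else
      (if (i : ℕ) - g.natDegree ≤ (j : ℕ) ∧ (j : ℕ) ≤ (i : ℕ) then
        g.coeff (g.natDegree + ((i : ℕ) - g.natDegree) - (j : ℕ)) else 0)

/-- The resultant of two polynomials, as the determinant of their Sylvester matrix. -/
noncomputable def resultantP {R : Type*} [CommRing R] (f g : R[X]) : R :=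
  (_root_.sylvester f g).det

/-- The discriminant of a monic polynomial. -/
noncomputable def discrP {R : Type*} [CommRing R] (f : R[X]) : R :=
  (-1 : R) ^ (f.natDegree * (f.natDegree - 1) / 2) * resultantP f (derivative f)

/-! Mathlib's `Polynomial.sylvester` is the transpose of `sylvester` with rows and columns
reversed, so `resultantP` is `Polynomial.resultant`. Here `f⁽ⁱ⁾ = n⁽ⁱ⁾ X^(n-i) + i! A` and
`f⁽ʲ⁾ = n⁽ʲ⁾ X^(n-j)` is a monomial, and `Res(g, c X^k) = (-1)^(mk) c^m g(0)^k` for `deg g ≤ m`.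
As `p > n`, the falling factorials `n⁽ᵏ⁾` and `i!` are nonzero, so the degrees are `n - i` and
`n - j` and the resultant is a nonzero constant times `A^(n-j)`, with `n - j > 0`. -/

namespace Polynomial

variable {R : Type*} [CommRing R]

lemma sylvester_eq_transpose_submatrix (f g : R[X]) :
    sylvester f g f.natDegree g.natDegree =
      (_root_.sylvester f g).transpose.submatrix (Fin.revPerm.trans (finCongr (add_comm _ _)))
        (Fin.revPerm.trans (finCongr (add_comm _ _))) := by
  ext r c
  have hr := r.isLt
  induction c using Fin.addCases with
  | left c =>
    have hc := c.isLt
    simp only [sylvester, _root_.sylvester, Matrix.of_apply, Fin.addCases_left,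
      Matrix.submatrix_apply, Matrix.transpose_apply, Equiv.trans_apply, Fin.revPerm_apply,
      finCongr_apply, Fin.val_cast, Fin.val_rev, Fin.val_castAdd, Set.mem_Icc]
    split_ifs <;> first | rfl | omega | (congr 1; omega)
  | right c =>
    have hc := c.isLt
    simp only [sylvester, _root_.sylvester, Matrix.of_apply, Fin.addCases_right,
      Matrix.submatrix_apply, Matrix.transpose_apply, Equiv.trans_apply, Fin.revPerm_apply,
      finCongr_apply, Fin.val_cast, Fin.val_rev, Fin.val_natAdd, Set.mem_Icc]
    split_ifs <;> first | rfl | omega | (congr 1; omega)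

lemma resultantP_eq_resultant (f g : R[X]) : resultantP f g = resultant f g := by
  rw [resultant, sylvester_eq_transpose_submatrix, Matrix.det_submatrix_equiv_self,
    Matrix.det_transpose, resultantP]

lemma resultant_C_mul_X_pow_right (f : R[X]) (c : R) (m k : ℕ) (hf : f.natDegree ≤ m) :
    resultant f (C c * X ^ k) m k = (-1) ^ (m * k) * c ^ m * f.coeff 0 ^ k := by
  rw [resultant_C_mul_right, resultant_X_pow_right f m k hf]
  ring

lemma iterate_derivative_X_pow_add_C_mul_X_pow (n i j : ℕ) (a : R) :
    derivative^[j] (X ^ n + C a * X ^ i : R[X]) =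
      C (n.descFactorial j : R) * X ^ (n - j) + C (a * i.descFactorial j) * X ^ (i - j) := by
  rw [iterate_map_add, iterate_derivative_X_pow_eq_C_mul, iterate_derivative_C_mul,
    iterate_derivative_X_pow_eq_C_mul, ← mul_assoc, ← C_mul]

end Polynomial

lemma natCast_ne_zero_of_dvd_factorial {K : Type*} [Field K] {p n m : ℕ} [CharP K p]
    (hnp : n < p) (hm : m ∣ n.factorial) : (m : K) ≠ 0 := by
  have hp : p.Prime := (CharP.char_is_prime_or_zero K p).resolve_right (by omega)
  rw [Ne, CharP.cast_eq_zero_iff K p]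
  intro hpm
  have := hp.dvd_factorial.mp (hpm.trans hm)
  omega

lemma natCast_descFactorial_ne_zero {K : Type*} [Field K] {p n k : ℕ} [CharP K p]
    (hnp : n < p) (hk : k ≤ n) : (n.descFactorial k : K) ≠ 0 :=
  natCast_ne_zero_of_dvd_factorial hnp (Dvd.intro_left _ (Nat.factorial_mul_descFactorial hk))

lemma natCast_descFactorial_eq_prod_range {R : Type*} [CommRing R] {n j : ℕ} (hjn : j ≤ n) :
    (n.descFactorial j : R) = ∏ k ∈ Finset.range j, ((n : R) - (k : ℕ)) := by
  rw [Nat.descFactorial_eq_prod_range, Nat.cast_prod]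
  refine Finset.prod_congr rfl fun k hk => ?_
  rw [Nat.cast_sub (by have := Finset.mem_range.mp hk; omega)]

lemma RatFunc.C_mul_X_pow_ne_C {F : Type*} [Field F] {u : F} (hu : u ≠ 0) {m : ℕ} (hm : m ≠ 0)
    (c : F) : RatFunc.C u * RatFunc.X ^ m ≠ RatFunc.C c := by
  intro h
  have hpoly : Polynomial.C u * Polynomial.X ^ m = Polynomial.C c := by
    apply RatFunc.algebraMap_injective F
    simpa using h
  have := congrArg Polynomial.natDegree hpoly
  rw [natDegree_C_mul_X_pow m u hu, natDegree_C] at this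
  exact hm this

theorem stmt4_general {F : Type*} [Field F] (p n i j : ℕ) [CharP F p]
    (hpn : n < p) (hij : i < j) (hjn : j < n)
    (f : Polynomial (RatFunc F))
    (hfdef : f = X ^ n + C RatFunc.X * X ^ i) :
    (resultantP (derivative^[i] f) (derivative^[j] f) =
        (∏ k ∈ Finset.range j, ((n : RatFunc F) - (k : ℕ))) ^ (n - i) *
          ((i.factorial : RatFunc F)) ^ (n - j) * RatFunc.X ^ (n - j) ∨
      resultantP (derivative^[i] f) (derivative^[j] f) =
        -((∏ k ∈ Finset.range j, ((n : RatFunc F) - (k : ℕ))) ^ (n - i) *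
          ((i.factorial : RatFunc F)) ^ (n - j) * RatFunc.X ^ (n - j))) ∧
    ∀ c : F, resultantP (derivative^[i] f) (derivative^[j] f) ≠ RatFunc.C c := by
  have hfi : derivative^[i] f =
      C (n.descFactorial i : RatFunc F) * X ^ (n - i) +
        C (RatFunc.X * (i.factorial : RatFunc F)) := by
    rw [hfdef, iterate_derivative_X_pow_add_C_mul_X_pow, Nat.descFactorial_self, Nat.sub_self,
      pow_zero, mul_one]
  have hfj : derivative^[j] f = C (n.descFactorial j : RatFunc F) * X ^ (n - j) := by
    rw [hfdef, iterate_derivative_X_pow_add_C_mul_X_pow, Nat.descFactorial_of_lt hij,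
      Nat.cast_zero, mul_zero, C_0, zero_mul, add_zero]
  set u : F := (-1) ^ ((n - i) * (n - j)) * (n.descFactorial j : F) ^ (n - i) *
    (i.factorial : F) ^ (n - j)
  have hu : u ≠ 0 := mul_ne_zero (mul_ne_zero (pow_ne_zero _ (neg_ne_zero.2 one_ne_zero))
    (pow_ne_zero _ (natCast_descFactorial_ne_zero hpn hjn.le))) (pow_ne_zero _
      (natCast_ne_zero_of_dvd_factorial hpn (Nat.factorial_dvd_factorial (by omega))))
  have hres : resultantP (derivative^[i] f) (derivative^[j] f) =
      RatFunc.C u * RatFunc.X ^ (n - j) := by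
    rw [resultantP_eq_resultant, hfi, hfj, natDegree_add_C,
      natDegree_C_mul_X_pow _ _ (natCast_descFactorial_ne_zero hpn (by omega)),
      natDegree_C_mul_X_pow _ _ (natCast_descFactorial_ne_zero hpn hjn.le),
      resultant_C_mul_X_pow_right _ _ _ _
        (natDegree_add_C.trans_le (natDegree_C_mul_X_pow_le _ _))]
    rw [coeff_add, coeff_C_mul_X_pow, if_neg (by omega), coeff_C_zero, zero_add]
    simp only [u, map_mul, map_pow, map_neg, map_one, map_natCast]
    ring
  refine ⟨?_, fun c => hres ▸ RatFunc.C_mul_X_pow_ne_C hu (by omega) c⟩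
  rw [hres, ← natCast_descFactorial_eq_prod_range hjn.le]
  simp only [u, map_mul, map_pow, map_neg, map_one, map_natCast]
  rcases neg_one_pow_eq_or (RatFunc F) ((n - i) * (n - j)) with h | h <;> rw [h]
  · left; ring
  · right; ring

/-- For `f = X^n + A X^i` over `𝔽_q(A)` with `p > n ≥ 2` and `0 ≤ i < j < n`, the resultant of
the `i`-th and `j`-th derivatives of `f` equals
`± (n(n-1)⋯(n-j+1))^{n-i} (i!)^{n-j} A^{n-j}`; in particular it is a nonconstant
function of `A`. -/
theorem stmt4 {F : Type*} [Field F] [Fintype F] (p n i j : ℕ) [CharP F p]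
    (hn : 2 ≤ n) (hpn : n < p) (hij : i < j) (hjn : j < n)
    (f : Polynomial (RatFunc F))
    (hfdef : f = X ^ n + C RatFunc.X * X ^ i) :
    (resultantP (derivative^[i] f) (derivative^[j] f) =
        (∏ k ∈ Finset.range j, ((n : RatFunc F) - (k : ℕ))) ^ (n - i) *
          ((i.factorial : RatFunc F)) ^ (n - j) * RatFunc.X ^ (n - j) ∨
      resultantP (derivative^[i] f) (derivative^[j] f) =
        -((∏ k ∈ Finset.range j, ((n : RatFunc F) - (k : ℕ))) ^ (n - i) *
          ((i.factorial : RatFunc F)) ^ (n - j) * RatFunc.X ^ (n - j))) ∧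
    ∀ c : F, resultantP (derivative^[i] f) (derivative^[j] f) ≠ RatFunc.C c :=
  stmt4_general p n i j hpn hij hjn f hfdef
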